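/- arXiv:1209.3048 — 2 statements merged into one kernel-verified Lean document; each statement's English description precedes it below -/
import Mathlib

section
/- Let A, B, D > 0 (case C = 0) and set ȳ = D/(A+B). For positive solutions of x₁' = -A·y², x₂' = -D + B·y with y = x₁/x₂, the ratio satisfies y' = -(A+B)·(y/x₂)·(y - ȳ). Consequently, if y(0) < ȳ then y is strictly increasing, and if y(0) > ȳ then y is strictly decreasing, on the interval of existence where 0 < y ≠ ȳ. -/
/-!
Writing `y = x₁ / x₂`, the quotient rule gives `y' = (y / x₂) (D - (A + B) y)`. For positive
solutions the factor `y / x₂` is positive, so the sign of `y'` is that of `ȳ - y` with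
`ȳ = D / (A + B)`, and the mean value theorem turns a derivative of constant sign on an
interval into strict monotonicity.
-/

lemma strictMonoOn_of_hasDerivAt_pos {s : Set ℝ} (hs : s.OrdConnected) {f f' : ℝ → ℝ}
    (hf : ∀ t ∈ s, HasDerivAt f (f' t) t) (hf' : ∀ t ∈ s, 0 < f' t) : StrictMonoOn f s :=
  strictMonoOn_of_hasDerivWithinAt_pos hs.convex
    (fun t ht => (hf t ht).continuousAt.continuousWithinAt)
    (fun t ht => (hf t (interior_subset ht)).hasDerivWithinAt)
    (fun t ht => hf' t (interior_subset ht))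

lemma strictAntiOn_of_hasDerivAt_neg {s : Set ℝ} (hs : s.OrdConnected) {f f' : ℝ → ℝ}
    (hf : ∀ t ∈ s, HasDerivAt f (f' t) t) (hf' : ∀ t ∈ s, f' t < 0) : StrictAntiOn f s :=
  strictAntiOn_of_hasDerivWithinAt_neg hs.convex
    (fun t ht => (hf t ht).continuousAt.continuousWithinAt)
    (fun t ht => (hf t (interior_subset ht)).hasDerivWithinAt)
    (fun t ht => hf' t (interior_subset ht))

lemma hasDerivAt_ratio_of_ode {A B D t : ℝ} {x₁ x₂ : ℝ → ℝ} (hAB : A + B ≠ 0)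
    (hx₂ : x₂ t ≠ 0) (h₁ : HasDerivAt x₁ (-A * (x₁ t / x₂ t) ^ 2) t)
    (h₂ : HasDerivAt x₂ (-D + B * (x₁ t / x₂ t)) t) :
    HasDerivAt (fun s => x₁ s / x₂ s)
      (-(A + B) * ((x₁ t / x₂ t) / x₂ t) * (x₁ t / x₂ t - D / (A + B))) t := by
  refine (h₁.div h₂ hx₂).congr_deriv ?_
  field_simp
  ring

theorem stmt7_general (A B D : ℝ) (hA : 0 < A) (hB : 0 < B)
    (I : Set ℝ) (hI : I.OrdConnected) (x₁ x₂ : ℝ → ℝ)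
    (hpos₁ : ∀ t ∈ I, 0 < x₁ t) (hpos₂ : ∀ t ∈ I, 0 < x₂ t)
    (hode₁ : ∀ t ∈ I, HasDerivAt x₁ (-A * (x₁ t / x₂ t) ^ 2) t)
    (hode₂ : ∀ t ∈ I, HasDerivAt x₂ (-D + B * (x₁ t / x₂ t)) t) :
    (∀ t ∈ I, HasDerivAt (fun s => x₁ s / x₂ s)
      (-(A + B) * ((x₁ t / x₂ t) / x₂ t) * (x₁ t / x₂ t - D / (A + B))) t) ∧
    ((∀ t ∈ I, 0 < x₁ t / x₂ t ∧ x₁ t / x₂ t < D / (A + B)) →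
      StrictMonoOn (fun t => x₁ t / x₂ t) I) ∧
    ((∀ t ∈ I, D / (A + B) < x₁ t / x₂ t) →
      StrictAntiOn (fun t => x₁ t / x₂ t) I) := by
  have hAB : 0 < A + B := add_pos hA hB
  have hderiv : ∀ t ∈ I, HasDerivAt (fun s => x₁ s / x₂ s)
      (-(A + B) * ((x₁ t / x₂ t) / x₂ t) * (x₁ t / x₂ t - D / (A + B))) t := fun t ht =>
    hasDerivAt_ratio_of_ode hAB.ne' (hpos₂ t ht).ne' (hode₁ t ht) (hode₂ t ht)
  have hscale : ∀ t ∈ I, 0 < (A + B) * ((x₁ t / x₂ t) / x₂ t) := fun t ht =>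
    mul_pos hAB (div_pos (div_pos (hpos₁ t ht) (hpos₂ t ht)) (hpos₂ t ht))
  refine ⟨hderiv, fun hbelow => ?_, fun habove => ?_⟩
  · refine strictMonoOn_of_hasDerivAt_pos hI hderiv fun t ht => ?_
    nlinarith [hscale t ht, (hbelow t ht).2]
  · refine strictAntiOn_of_hasDerivAt_neg hI hderiv fun t ht => ?_
    nlinarith [hscale t ht, habove t ht]

theorem stmt7 (A B D : ℝ) (hA : 0 < A) (hB : 0 < B) (hD : 0 < D)
    (I : Set ℝ) (hI : I.OrdConnected) (x₁ x₂ : ℝ → ℝ)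
    (hpos₁ : ∀ t ∈ I, 0 < x₁ t) (hpos₂ : ∀ t ∈ I, 0 < x₂ t)
    (hode₁ : ∀ t ∈ I, HasDerivAt x₁ (-A * (x₁ t / x₂ t) ^ 2) t)
    (hode₂ : ∀ t ∈ I, HasDerivAt x₂ (-D + B * (x₁ t / x₂ t)) t) :
    (∀ t ∈ I, HasDerivAt (fun s => x₁ s / x₂ s)
      (-(A + B) * ((x₁ t / x₂ t) / x₂ t) * (x₁ t / x₂ t - D / (A + B))) t) ∧
    ((∀ t ∈ I, 0 < x₁ t / x₂ t ∧ x₁ t / x₂ t < D / (A + B)) →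
      StrictMonoOn (fun t => x₁ t / x₂ t) I) ∧
    ((∀ t ∈ I, D / (A + B) < x₁ t / x₂ t) →
      StrictAntiOn (fun t => x₁ t / x₂ t) I) :=
  stmt7_general A B D hA hB I hI x₁ x₂ hpos₁ hpos₂ hode₁ hode₂
end

section
/- Let A, B, C, D > 0 with two distinct roots y₁ < y₂ of C - Dy + (A+B)y² = 0. Define, for a positive solution (x₁, x₂) of the system x₁' = -C - A·y², x₂' = -D + B·y (y = x₁/x₂) with y(t) ∉ {y₁, y₂}, the quantity Λ(t) = (1/x₂(t))·|y(t) - y₁|^{-(1/(A+B))(B + (D - B y₂)/(y₂ - y₁))}·|y₂ - y(t)|^{(1/(A+B))·(D - B y₂)/(y₂ - y₁)}. Then Λ is constant in t. -/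
/-!
Writing `y = x₁ / x₂`, the system gives `y' = -(C - D y + (A + B) y²) / x₂`, and since `y₁, y₂`
are the roots, `C - D y + (A + B) y² = (A + B) (y - y₁) (y - y₂)`. Hence
`x₂' / x₂ = y' (D - B y) / ((A + B) (y - y₁) (y - y₂))`, and splitting the right-hand side into
partial fractions exhibits it as the derivative of `p log |y - y₁| + q log |y₂ - y|`, where
`p` and `q` are the two exponents of the statement. So `log Λ` has derivative zero along the
solution and is therefore constant on the interval `I`.
-/

open Real

theorem Set.OrdConnected.eq_of_hasDerivAt_eq_zero {E : Type*} [NormedAddCommGroup E]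
    [NormedSpace ℝ E] {I : Set ℝ} (hI : I.OrdConnected) {f : ℝ → E}
    (hf : ∀ t ∈ I, HasDerivAt f 0 t) {s t : ℝ} (hs : s ∈ I) (ht : t ∈ I) : f s = f t := by
  have h := hI.convex.norm_image_sub_le_of_norm_hasDerivWithin_le
    (fun u hu => (hf u hu).hasDerivWithinAt) (fun _ _ => (norm_zero (E := E)).le) ht hs
  rw [zero_mul, norm_le_zero_iff, sub_eq_zero] at h
  exact h

theorem quadratic_eq_mul_sub_mul_sub {a b c r₁ r₂ : ℝ}
    (h₁ : c - b * r₁ + a * r₁ ^ 2 = 0) (h₂ : c - b * r₂ + a * r₂ ^ 2 = 0) (h : r₁ ≠ r₂)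
    (y : ℝ) : c - b * y + a * y ^ 2 = a * (y - r₁) * (y - r₂) := by
  have hb : b = a * (r₁ + r₂) := by
    refine mul_right_cancel₀ (sub_ne_zero.2 h.symm) ?_
    linear_combination h₁ - h₂
  have hc : c = a * (r₁ * r₂) := by linear_combination h₁ + r₁ * hb
  rw [hb, hc]
  ring

theorem partial_fractions {a B D y y₁ y₂ : ℝ} (ha : a ≠ 0) (h₁ : y ≠ y₁) (h₂ : y ≠ y₂)
    (h12 : y₁ ≠ y₂) :
    (D - B * y) / (a * (y - y₁) * (y - y₂)) =
      -(1 / a) * (B + (D - B * y₂) / (y₂ - y₁)) / (y - y₁) -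
        (1 / a) * ((D - B * y₂) / (y₂ - y₁)) / (y₂ - y) := by
  have : y - y₁ ≠ 0 := sub_ne_zero.2 h₁
  have : y - y₂ ≠ 0 := sub_ne_zero.2 h₂
  have : y₂ - y ≠ 0 := sub_ne_zero.2 h₂.symm
  have : y₂ - y₁ ≠ 0 := sub_ne_zero.2 h12.symm
  field_simp
  ring

theorem hasDerivAt_div_of_ode {A B C D t : ℝ} {x₁ x₂ : ℝ → ℝ}
    (h₁ : HasDerivAt x₁ (-C - A * (x₁ t / x₂ t) ^ 2) t)
    (h₂ : HasDerivAt x₂ (-D + B * (x₁ t / x₂ t)) t) (hx₂ : x₂ t ≠ 0) :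
    HasDerivAt (fun t => x₁ t / x₂ t)
      (-(C - D * (x₁ t / x₂ t) + (A + B) * (x₁ t / x₂ t) ^ 2) / x₂ t) t := by
  refine (h₁.div h₂ hx₂).congr_deriv ?_
  field_simp
  ring

-- `Real.log` is even, so these are `log |y - y₁|` and `log |y₂ - y|` for `y = x₁ / x₂`.
noncomputable def logFirstIntegral (A B D y₁ y₂ : ℝ) (x₁ x₂ : ℝ → ℝ) (t : ℝ) : ℝ :=
  -log (x₂ t) + -(1 / (A + B)) * (B + (D - B * y₂) / (y₂ - y₁)) * log (x₁ t / x₂ t - y₁) +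
    (1 / (A + B)) * ((D - B * y₂) / (y₂ - y₁)) * log (y₂ - x₁ t / x₂ t)

theorem hasDerivAt_logFirstIntegral {A B C D y₁ y₂ t : ℝ} {x₁ x₂ : ℝ → ℝ} (hAB : A + B ≠ 0)
    (hroot₁ : C - D * y₁ + (A + B) * y₁ ^ 2 = 0) (hroot₂ : C - D * y₂ + (A + B) * y₂ ^ 2 = 0)
    (h12 : y₁ ≠ y₂) (h₁ : HasDerivAt x₁ (-C - A * (x₁ t / x₂ t) ^ 2) t)
    (h₂ : HasDerivAt x₂ (-D + B * (x₁ t / x₂ t)) t) (hx₂ : x₂ t ≠ 0)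
    (hy₁ : x₁ t / x₂ t ≠ y₁) (hy₂ : x₁ t / x₂ t ≠ y₂) :
    HasDerivAt (logFirstIntegral A B D y₁ y₂ x₁ x₂) 0 t := by
  have hy := hasDerivAt_div_of_ode h₁ h₂ hx₂
  rw [quadratic_eq_mul_sub_mul_sub hroot₁ hroot₂ h12] at hy
  have hlog₁ := (hy.sub_const y₁).log (sub_ne_zero.2 hy₁)
  have hlog₂ := (hy.const_sub y₂).log (sub_ne_zero.2 hy₂.symm)
  refine ((h₂.log hx₂).neg.add (hlog₁.const_mul _) |>.add (hlog₂.const_mul _)).congr_deriv ?_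
  set y := x₁ t / x₂ t
  have : y - y₁ ≠ 0 := sub_ne_zero.2 hy₁
  have : y - y₂ ≠ 0 := sub_ne_zero.2 hy₂
  have : y₂ - y ≠ 0 := sub_ne_zero.2 hy₂.symm
  linear_combination (norm := skip) (-((A + B) * (y - y₁) * (y - y₂)) / x₂ t) *
    partial_fractions (D := D) (B := B) hAB hy₁ hy₂ h12
  field_simp
  ring

theorem one_div_mul_abs_rpow_mul_abs_rpow {u v w p q : ℝ} (hu : 0 < u) (hv : v ≠ 0) (hw : w ≠ 0) :
    1 / u * |v| ^ p * |w| ^ q = exp (-log u + p * log v + q * log w) := by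
  rw [exp_add, exp_add, exp_neg, exp_log hu, one_div, rpow_def_of_pos (abs_pos.2 hv),
    rpow_def_of_pos (abs_pos.2 hw), log_abs, log_abs, mul_comm p, mul_comm q]

theorem stmt9_general (A B C D y₁ y₂ : ℝ) (hA : 0 < A) (hB : 0 < B)
    (hroot₁ : C - D * y₁ + (A + B) * y₁ ^ 2 = 0)
    (hroot₂ : C - D * y₂ + (A + B) * y₂ ^ 2 = 0)
    (h12 : y₁ < y₂)
    (I : Set ℝ) (hI : I.OrdConnected) (x₁ x₂ : ℝ → ℝ)
    (hpos₂ : ∀ t ∈ I, 0 < x₂ t)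
    (hode₁ : ∀ t ∈ I, HasDerivAt x₁ (-C - A * (x₁ t / x₂ t) ^ 2) t)
    (hode₂ : ∀ t ∈ I, HasDerivAt x₂ (-D + B * (x₁ t / x₂ t)) t)
    (hne : ∀ t ∈ I, x₁ t / x₂ t ≠ y₁ ∧ x₁ t / x₂ t ≠ y₂) :
    ∀ s ∈ I, ∀ t ∈ I,
      (1 / x₂ s) *
        |x₁ s / x₂ s - y₁| ^ (-(1 / (A + B)) * (B + (D - B * y₂) / (y₂ - y₁))) *
        |y₂ - x₁ s / x₂ s| ^ ((1 / (A + B)) * ((D - B * y₂) / (y₂ - y₁))) =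
      (1 / x₂ t) *
        |x₁ t / x₂ t - y₁| ^ (-(1 / (A + B)) * (B + (D - B * y₂) / (y₂ - y₁))) *
        |y₂ - x₁ t / x₂ t| ^ ((1 / (A + B)) * ((D - B * y₂) / (y₂ - y₁))) := by
  have hAB : A + B ≠ 0 := by positivity
  have hlog : ∀ t ∈ I, HasDerivAt (logFirstIntegral A B D y₁ y₂ x₁ x₂) 0 t := fun t ht =>
    hasDerivAt_logFirstIntegral hAB hroot₁ hroot₂ h12.ne (hode₁ t ht) (hode₂ t ht)
      (hpos₂ t ht).ne' (hne t ht).1 (hne t ht).2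
  have hexp : ∀ t ∈ I, 1 / x₂ t *
      |x₁ t / x₂ t - y₁| ^ (-(1 / (A + B)) * (B + (D - B * y₂) / (y₂ - y₁))) *
      |y₂ - x₁ t / x₂ t| ^ ((1 / (A + B)) * ((D - B * y₂) / (y₂ - y₁))) =
      exp (logFirstIntegral A B D y₁ y₂ x₁ x₂ t) := fun t ht =>
    one_div_mul_abs_rpow_mul_abs_rpow (hpos₂ t ht) (sub_ne_zero.2 (hne t ht).1)
      (sub_ne_zero.2 (hne t ht).2.symm)
  intro s hs t ht
  rw [hexp s hs, hexp t ht, hI.eq_of_hasDerivAt_eq_zero hlog hs ht]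

theorem stmt9 (A B C D y₁ y₂ : ℝ) (hA : 0 < A) (hB : 0 < B) (hC : 0 < C) (hD : 0 < D)
    (hroot₁ : C - D * y₁ + (A + B) * y₁ ^ 2 = 0)
    (hroot₂ : C - D * y₂ + (A + B) * y₂ ^ 2 = 0)
    (h12 : y₁ < y₂)
    (I : Set ℝ) (hI : I.OrdConnected) (x₁ x₂ : ℝ → ℝ)
    (hpos₁ : ∀ t ∈ I, 0 < x₁ t) (hpos₂ : ∀ t ∈ I, 0 < x₂ t)
    (hode₁ : ∀ t ∈ I, HasDerivAt x₁ (-C - A * (x₁ t / x₂ t) ^ 2) t)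
    (hode₂ : ∀ t ∈ I, HasDerivAt x₂ (-D + B * (x₁ t / x₂ t)) t)
    (hne : ∀ t ∈ I, x₁ t / x₂ t ≠ y₁ ∧ x₁ t / x₂ t ≠ y₂) :
    ∀ s ∈ I, ∀ t ∈ I,
      (1 / x₂ s) *
        |x₁ s / x₂ s - y₁| ^ (-(1 / (A + B)) * (B + (D - B * y₂) / (y₂ - y₁))) *
        |y₂ - x₁ s / x₂ s| ^ ((1 / (A + B)) * ((D - B * y₂) / (y₂ - y₁))) =
      (1 / x₂ t) *
        |x₁ t / x₂ t - y₁| ^ (-(1 / (A + B)) * (B + (D - B * y₂) / (y₂ - y₁))) *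
        |y₂ - x₁ t / x₂ t| ^ ((1 / (A + B)) * ((D - B * y₂) / (y₂ - y₁))) :=
  stmt9_general A B C D y₁ y₂ hA hB hroot₁ hroot₂ h12 I hI x₁ x₂ hpos₂ hode₁ hode₂ hne
end
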